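/- arXiv:1810.11289 — 2 statements merged into one kernel-verified Lean document; each statement's English description precedes it below -/
import Mathlib

section
/- Let K ∈ ℝ, N ∈ (1,∞), and let h be an MCP(K,N)-density on a finite interval (a,b) ⊂ ℝ (with b − a ≤ π√((N−1)/K) if K > 0) which integrates to 1, i.e. ∫ₐᵇ h(x) dx = 1. Then: if K ≥ 0, sup_{x ∈ (a,b)} h(x) ≤ N/(b−a); and if K < 0, sup_{x ∈ (a,b)} h(x) ≤ (1/(b−a)) · ( ∫₀¹ ( s_{K/(N−1)}(t(b−a)) / s_{K/(N−1)}(b−a) )^{N−1} dt )^{−1}. -/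
open MeasureTheory Filter

noncomputable section

/-- The comparison function `s_κ(θ)`:
`sin(√κ·θ)/√κ` if `κ > 0`, `θ` if `κ = 0`, `sinh(√(−κ)·θ)/√(−κ)` if `κ < 0`. -/
def sK (κ θ : ℝ) : ℝ :=
  if 0 < κ then Real.sin (Real.sqrt κ * θ) / Real.sqrt κ
  else if κ = 0 then θ
  else Real.sinh (Real.sqrt (-κ) * θ) / Real.sqrt (-κ)

/-- `h` is an `MCP(K,N)`-density on the interval `I ⊆ ℝ`: it is a nonnegative Borel
function satisfying
`h(t·x₁+(1−t)·x₀) ≥ (s_{K/(N−1)}((1−t)|x₁−x₀|)/s_{K/(N−1)}(|x₁−x₀|))^{N−1}·h(x₀)`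
for all `x₀, x₁ ∈ I`, `t ∈ [0,1]`; when `x₀ = x₁` the coefficient is interpreted as `1−t`,
and when `K > 0` and `|x₁−x₀| ≥ π√((N−1)/K)` the coefficient is `+∞`, forcing `h x₀ = 0`. -/
def IsMCPDensity (K N : ℝ) (I : Set ℝ) (h : ℝ → ℝ) : Prop :=
  Measurable h ∧ (∀ x ∈ I, 0 ≤ h x) ∧
  ∀ x₀ ∈ I, ∀ x₁ ∈ I, ∀ t ∈ Set.Icc (0:ℝ) 1,
    (x₀ = x₁ → (1 - t) * h x₀ ≤ h x₀) ∧
    (x₀ ≠ x₁ →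
      ((0 < K ∧ Real.pi * Real.sqrt ((N - 1) / K) ≤ |x₁ - x₀|) → h x₀ = 0) ∧
      (¬(0 < K ∧ Real.pi * Real.sqrt ((N - 1) / K) ≤ |x₁ - x₀|) →
        (sK (K / (N - 1)) ((1 - t) * |x₁ - x₀|) / sK (K / (N - 1)) |x₁ - x₀|) ^ (N - 1) * h x₀
          ≤ h (t * x₁ + (1 - t) * x₀)))

/-- `h` is a `CD(K,N)`-density on the interval `I ⊆ ℝ`. -/
def IsCDDensity (K N : ℝ) (I : Set ℝ) (h : ℝ → ℝ) : Prop :=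
  (∀ x ∈ I, 0 ≤ h x) ∧
  ∀ x₀ ∈ I, ∀ x₁ ∈ I, x₀ < x₁ → ∀ t ∈ Set.Icc (0:ℝ) 1,
    (sK (K / (N - 1)) ((1 - t) * (x₁ - x₀)) / sK (K / (N - 1)) (x₁ - x₀)) * h x₀ ^ (1 / (N - 1))
      + (sK (K / (N - 1)) (t * (x₁ - x₀)) / sK (K / (N - 1)) (x₁ - x₀)) * h x₁ ^ (1 / (N - 1))
      ≤ h ((1 - t) * x₀ + t * x₁) ^ (1 / (N - 1))

/-- The lower-bound function `f_{K,N,D}`. -/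
def fKND (K N D : ℝ) (x : ℝ) : ℝ :=
  if x = 0 ∨ x = D then 0
  else ((∫ y in (0:ℝ)..x, (sK (K / (N - 1)) (D - y) / sK (K / (N - 1)) (D - x)) ^ (N - 1)) +
        (∫ y in x..D, (sK (K / (N - 1)) y / sK (K / (N - 1)) x) ^ (N - 1)))⁻¹

/-- The model density `h^a_{K,N,D}`. -/
def hKND (K N D a : ℝ) (x : ℝ) : ℝ :=
  if x ≤ a then fKND K N D a * (sK (K / (N - 1)) (D - x) / sK (K / (N - 1)) (D - a)) ^ (N - 1)
  else fKND K N D a * (sK (K / (N - 1)) x / sK (K / (N - 1)) a) ^ (N - 1)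

/-- `v_{K,N,D}(a) = ∫₀ᵃ h^a_{K,N,D}(x) dx`. -/
def vKND (K N D a : ℝ) : ℝ := ∫ x in (0:ℝ)..a, hKND K N D a x

/-- The (outer) Minkowski content of `A` with respect to `μ`:
`liminf_{ε→0⁺} (μ(Aᵉ) − μ(A))/ε` where `Aᵉ` is the open `ε`-neighbourhood of `A`. -/
def mink (μ : Measure ℝ) (A : Set ℝ) : ℝ :=
  Filter.liminf (fun ε : ℝ => ((μ (Metric.thickening ε A)).toReal - (μ A).toReal) / ε)
    (nhdsWithin 0 (Set.Ioi 0))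

/-- The measure `μ_h = h · Leb` restricted to `[0,D]`. -/
def muh (h : ℝ → ℝ) (D : ℝ) : Measure ℝ :=
  (volume.restrict (Set.Icc (0:ℝ) D)).withDensity (fun x => ENNReal.ofReal (h x))

/-- The restricted one-dimensional isoperimetric profile `Ĩ_{K,N,D}(v)` over
`MCP(K,N)`-densities on `[0,D]` integrating to `1`. -/
def Itilde (K N D v : ℝ) : ℝ :=
  sInf { p : ℝ | ∃ h : ℝ → ℝ, IsMCPDensity K N (Set.Icc 0 D) h ∧
    (∫ x in (0:ℝ)..D, h x) = 1 ∧
    ∃ A : Set ℝ, MeasurableSet A ∧ A ⊆ Set.Icc 0 D ∧ (muh h D A).toReal = v ∧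
      p = mink (muh h D) A }

/-- The restricted one-dimensional isoperimetric profile `Ĩ^{CD}_{K,N,D}(v)` over
`CD(K,N)`-densities on `[0,D]` integrating to `1`. -/
def ItildeCD (K N D v : ℝ) : ℝ :=
  sInf { p : ℝ | ∃ h : ℝ → ℝ, IsCDDensity K N (Set.Icc 0 D) h ∧
    (∫ x in (0:ℝ)..D, h x) = 1 ∧
    ∃ A : Set ℝ, MeasurableSet A ∧ A ⊆ Set.Icc 0 D ∧ (muh h D A).toReal = v ∧
      p = mink (muh h D) A }

/-! Along the segment from `x₀` to `x₁`, with `d = |x₁ - x₀|` and `κ = K/(N-1)`, the MCP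
inequality bounds `h` from below by `h x₀ * (s_κ((1 - t) d) / s_κ(d))^(N-1)`; integrating, the mass
of `h` between `x₀` and `x₁` is at least `d * h x₀ * I(d)`, `I(d) = ∫₀¹ (s_κ(t d) / s_κ(d))^(N-1) dt`.
Doing this towards both ends of `(a, b)` gives `h x₀ * (b - a) * inf_{d < b - a} I(d) ≤ 1`.
For `K ≥ 0`, concavity of `s_κ` gives `s_κ(t d) ≥ t s_κ(d)`, hence `I(d) ≥ ∫₀¹ t^(N-1) dt = 1/N`;
for `K < 0`, `d ↦ sinh(t d)/sinh d` is decreasing, hence `I(d) ≥ I(b - a)`. -/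

open Real Set Topology

lemma continuous_sK (κ : ℝ) : Continuous (sK κ) := by
  unfold sK
  split_ifs <;> fun_prop

lemma sK_pos {κ θ : ℝ} (hθ : 0 < θ) (hπ : 0 < κ → √κ * θ < π) : 0 < sK κ θ := by
  unfold sK
  split_ifs with hκ hκ'
  · have hs := sqrt_pos.2 hκ
    exact div_pos (sin_pos_of_pos_of_lt_pi (mul_pos hs hθ) (hπ hκ)) hs
  · exact hθ
  · have hs : 0 < √(-κ) := sqrt_pos.2 (neg_pos.2 (lt_of_le_of_ne (not_lt.1 hκ) hκ'))
    exact div_pos (sinh_pos_iff.2 (mul_pos hs hθ)) hs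

lemma sK_nonneg_of_nonpos {κ θ : ℝ} (hκ : κ ≤ 0) (hθ : 0 ≤ θ) : 0 ≤ sK κ θ := by
  unfold sK
  split_ifs with hκ₀ hκ₀'
  · exact (not_le.2 hκ₀ hκ).elim
  · exact hθ
  · exact div_nonneg (sinh_nonneg_iff.2 (mul_nonneg (sqrt_nonneg _) hθ)) (sqrt_nonneg _)

lemma mul_sK_le_sK_mul {κ d s : ℝ} (hκ : 0 ≤ κ) (hd : 0 ≤ d) (hπ : √κ * d ≤ π)
    (hs : s ∈ Icc (0 : ℝ) 1) : s * sK κ d ≤ sK κ (s * d) := by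
  rcases hκ.eq_or_lt with rfl | hκ
  · simp [sK]
  simp only [sK, if_pos hκ, ← mul_div_assoc]
  gcongr
  have hconc := strictConcaveOn_sin_Icc.concaveOn.2 (x := √κ * d) (y := 0)
    ⟨by positivity, hπ⟩ ⟨le_rfl, pi_pos.le⟩ hs.1 (sub_nonneg.2 hs.2) (by ring)
  simpa [mul_left_comm] using hconc

lemma mul_cosh_mul_mul_sinh_le {t u : ℝ} (ht : t ∈ Icc (0 : ℝ) 1) (hu : 0 ≤ u) :
    t * cosh (t * u) * sinh u ≤ sinh (t * u) * cosh u := by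
  let F : ℝ → ℝ := fun x => sinh (t * x) * cosh x - t * (cosh (t * x) * sinh x)
  have hF : ∀ x, HasDerivAt F ((1 - t ^ 2) * (sinh (t * x) * sinh x)) x := by
    intro x
    have hlin := (hasDerivAt_id x).const_mul t
    exact ((hlin.sinh.mul (hasDerivAt_cosh x)).sub
      ((hlin.cosh.mul (hasDerivAt_sinh x)).const_mul t)).congr_deriv (by simp only [id]; ring)
  have hmono : MonotoneOn F (Ici 0) := by
    refine monotoneOn_of_deriv_nonneg (convex_Ici 0)
      (fun x _ => (hF x).continuousAt.continuousWithinAt)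
      (fun x _ => (hF x).differentiableAt.differentiableWithinAt) fun x hx => ?_
    rw [interior_Ici] at hx
    rw [(hF x).deriv]
    have h1 : 0 ≤ 1 - t ^ 2 := by nlinarith [ht.1, ht.2]
    have h2 : 0 ≤ sinh (t * x) := sinh_nonneg_iff.2 (mul_nonneg ht.1 (le_of_lt hx))
    have h3 : 0 ≤ sinh x := sinh_nonneg_iff.2 (le_of_lt hx)
    positivity
  have := hmono self_mem_Ici hu hu
  simp only [F, mul_zero, sinh_zero, cosh_zero, mul_one, sub_zero] at this
  linarith

lemma antitoneOn_sinh_mul_div_sinh {t : ℝ} (ht : t ∈ Icc (0 : ℝ) 1) :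
    AntitoneOn (fun u => sinh (t * u) / sinh u) (Ioi 0) := by
  have hF : ∀ x ∈ Ioi (0 : ℝ), HasDerivAt (fun u => sinh (t * u) / sinh u)
      ((t * cosh (t * x) * sinh x - sinh (t * x) * cosh x) / sinh x ^ 2) x := by
    intro x hx
    exact (((hasDerivAt_id x).const_mul t).sinh.div (hasDerivAt_sinh x)
      (sinh_pos_iff.2 hx).ne').congr_deriv (by simp only [id]; ring)
  refine antitoneOn_of_deriv_nonpos (convex_Ioi 0)
    (fun x hx => (hF x hx).continuousAt.continuousWithinAt) ?_ fun x hx => ?_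
  · rw [interior_Ioi]
    exact fun x hx => (hF x hx).differentiableAt.differentiableWithinAt
  · rw [interior_Ioi] at hx
    rw [(hF x hx).deriv]
    exact div_nonpos_of_nonpos_of_nonneg
      (sub_nonpos.2 (mul_cosh_mul_mul_sinh_le ht (le_of_lt hx))) (sq_nonneg _)

lemma antitoneOn_sK_mul_div_sK {κ t : ℝ} (hκ : κ < 0) (ht : t ∈ Icc (0 : ℝ) 1) :
    AntitoneOn (fun d => sK κ (t * d) / sK κ d) (Ioi 0) := by
  intro d hd D hD hdD
  have hc : 0 < √(-κ) := sqrt_pos.2 (neg_pos.2 hκ)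
  have hscale : ∀ x, 0 < x → sK κ (t * x) / sK κ x
      = sinh (t * (√(-κ) * x)) / sinh (√(-κ) * x) := by
    intro x hx
    have : sinh (√(-κ) * x) ≠ 0 := (sinh_pos_iff.2 (mul_pos hc hx)).ne'
    simp only [sK, if_neg (not_lt.2 hκ.le), if_neg hκ.ne]
    field_simp
  simp only [hscale d hd, hscale D hD]
  exact antitoneOn_sinh_mul_div_sinh ht (mul_pos hc hd) (mul_pos hc hD) (by gcongr)

def sKRatioIntegral (κ p d : ℝ) : ℝ := ∫ t in (0 : ℝ)..1, (sK κ (t * d) / sK κ d) ^ p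

lemma continuous_sK_mul_div_rpow (κ d : ℝ) {p : ℝ} (hp : 0 ≤ p) :
    Continuous fun t => (sK κ (t * d) / sK κ d) ^ p :=
  (((continuous_sK κ).comp (continuous_id.mul continuous_const)).div_const _).rpow_const
    fun _ => Or.inr hp

lemma inv_add_one_le_sKRatioIntegral {κ p d : ℝ} (hκ : 0 ≤ κ) (hp : 0 ≤ p) (hd : 0 < d)
    (hπ : √κ * d < π) : (p + 1)⁻¹ ≤ sKRatioIntegral κ p d := by
  have hsd : 0 < sK κ d := sK_pos hd fun _ => hπ
  have hpow : ∫ t in (0 : ℝ)..1, t ^ p = (p + 1)⁻¹ := by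
    rw [integral_rpow (Or.inl (by linarith)), one_rpow, zero_rpow (by linarith), sub_zero,
      one_div]
  rw [← hpow]
  refine intervalIntegral.integral_mono_on zero_le_one
    ((continuous_rpow_const hp).intervalIntegrable 0 1)
    ((continuous_sK_mul_div_rpow κ d hp).intervalIntegrable 0 1) fun t ht => ?_
  refine rpow_le_rpow ht.1 ((le_div_iff₀ hsd).2 ?_) hp
  exact mul_sK_le_sK_mul hκ hd.le hπ.le ht

lemma sKRatioIntegral_le_of_le {κ p d D : ℝ} (hκ : κ < 0) (hp : 0 ≤ p) (hd : 0 < d)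
    (hdD : d ≤ D) : sKRatioIntegral κ p D ≤ sKRatioIntegral κ p d := by
  have hD := hd.trans_le hdD
  refine intervalIntegral.integral_mono_on zero_le_one
    ((continuous_sK_mul_div_rpow κ D hp).intervalIntegrable 0 1)
    ((continuous_sK_mul_div_rpow κ d hp).intervalIntegrable 0 1) fun t ht => ?_
  have hratio : 0 ≤ sK κ (t * D) / sK κ D :=
    div_nonneg (sK_nonneg_of_nonpos hκ.le (mul_nonneg ht.1 hD.le))
      (sK_nonneg_of_nonpos hκ.le hD.le)
  exact rpow_le_rpow hratio (antitoneOn_sK_mul_div_sK hκ ht hd hD hdD) hp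

lemma sKRatioIntegral_pos {κ p d : ℝ} (hp : 0 ≤ p) (hd : 0 < d)
    (hπ : 0 < κ → √κ * d < π) : 0 < sKRatioIntegral κ p d := by
  refine intervalIntegral.intervalIntegral_pos_of_pos_on
    ((continuous_sK_mul_div_rpow κ d hp).intervalIntegrable 0 1) (fun t ht => ?_) one_pos
  have htd : √κ * (t * d) ≤ √κ * d := by gcongr; exact mul_le_of_le_one_left hd.le ht.2.le
  exact rpow_pos_of_pos
    (div_pos (sK_pos (mul_pos ht.1 hd) fun hκ => htd.trans_lt (hπ hκ)) (sK_pos hd hπ)) _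

lemma sqrt_div_mul_lt_pi {K n d D : ℝ} (hK : 0 ≤ K) (hn : 0 < n)
    (hDK : 0 < K → D ≤ π * √(n / K)) (hdD : d < D) : √(K / n) * d < π := by
  rcases hK.eq_or_lt with rfl | hK
  · simp [pi_pos]
  have hinv : √(K / n) * √(n / K) = 1 := by
    rw [← sqrt_mul (div_pos hK hn).le, div_mul_div_comm, mul_comm n, div_self (by positivity),
      sqrt_one]
  calc √(K / n) * d < √(K / n) * (π * √(n / K)) := by
        gcongr
        exact hdD.trans_le (hDK hK)
    _ = π := by rw [mul_left_comm, hinv, mul_one]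

lemma sub_mul_integral_comp_segment (f : ℝ → ℝ) (x₀ x₁ : ℝ) :
    (x₁ - x₀) * ∫ t in (0 : ℝ)..1, f (t * x₁ + (1 - t) * x₀) = ∫ x in x₀..x₁, f x := by
  have h := intervalIntegral.smul_integral_comp_mul_add (a := 0) (b := 1) f (x₁ - x₀) x₀
  simp only [smul_eq_mul, mul_zero, zero_add, mul_one, sub_add_cancel] at h
  rw [← h]
  congr 2 with t
  ring_nf

lemma IntervalIntegrable.comp_segment {f : ℝ → ℝ} {x₀ x₁ : ℝ}
    (hf : IntervalIntegrable f volume x₀ x₁) (hne : x₀ ≠ x₁) :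
    IntervalIntegrable (fun t => f (t * x₁ + (1 - t) * x₀)) volume 0 1 := by
  have hc : x₁ - x₀ ≠ 0 := sub_ne_zero.2 hne.symm
  have h := (hf.comp_add_right x₀).comp_mul_left (c := x₁ - x₀)
  simp only [sub_self, zero_div, div_self hc] at h
  convert h using 2 with t
  ring_nf

namespace IsMCPDensity

variable {K N : ℝ} {h : ℝ → ℝ}

theorem mul_sKRatioIntegral_le_integral_comp_segment {I : Set ℝ} (hN : 1 ≤ N)
    (hMCP : IsMCPDensity K N I h) {x₀ x₁ : ℝ} (hx₀ : x₀ ∈ I) (hx₁ : x₁ ∈ I) (hne : x₀ ≠ x₁)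
    (hnear : ¬(0 < K ∧ π * √((N - 1) / K) ≤ |x₁ - x₀|))
    (hint : IntervalIntegrable h volume x₀ x₁) :
    h x₀ * sKRatioIntegral (K / (N - 1)) (N - 1) |x₁ - x₀| ≤
      ∫ t in (0 : ℝ)..1, h (t * x₁ + (1 - t) * x₀) := by
  set κ := K / (N - 1)
  set d := |x₁ - x₀|
  have hp : 0 ≤ N - 1 := sub_nonneg.2 hN
  have hflip : ∫ t in (0 : ℝ)..1, (sK κ ((1 - t) * d) / sK κ d) ^ (N - 1) =
      sKRatioIntegral κ (N - 1) d := by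
    simpa [sKRatioIntegral] using intervalIntegral.integral_comp_sub_left
      (fun t => (sK κ (t * d) / sK κ d) ^ (N - 1)) (a := 0) (b := 1) 1
  calc h x₀ * sKRatioIntegral κ (N - 1) d
      = ∫ t in (0 : ℝ)..1, (sK κ ((1 - t) * d) / sK κ d) ^ (N - 1) * h x₀ := by
        rw [intervalIntegral.integral_mul_const, hflip, mul_comm]
    _ ≤ ∫ t in (0 : ℝ)..1, h (t * x₁ + (1 - t) * x₀) :=
        intervalIntegral.integral_mono_on zero_le_one
          ((((continuous_sK_mul_div_rpow κ d hp).comp (continuous_const.sub continuous_id)).mul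
            continuous_const).intervalIntegrable 0 1)
          (hint.comp_segment hne) fun t ht => ((hMCP.2.2 x₀ hx₀ x₁ hx₁ t ht).2 hne).2 hnear

variable {a b c : ℝ}

theorem mul_mul_sub_le_integral (hN : 1 < N) (hDK : 0 < K → b - a ≤ π * √((N - 1) / K))
    (hMCP : IsMCPDensity K N (Ioo a b) h) (hint : IntervalIntegrable h volume a b)
    (hc : ∀ d ∈ Ioo 0 (b - a), c ≤ sKRatioIntegral (K / (N - 1)) (N - 1) d)
    {p q x₀ : ℝ} (hp : a < p) (hpx : p < x₀) (hxq : x₀ < q) (hq : q < b) :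
    h x₀ * c * (q - p) ≤ ∫ x in p..q, h x := by
  have hx₀ : x₀ ∈ Ioo a b := ⟨hp.trans hpx, hxq.trans hq⟩
  have hint' : ∀ {u v}, u ∈ Ioo a b → v ∈ Ioo a b → IntervalIntegrable h volume u v :=
    fun hu hv => hint.mono_set <| by
      rw [uIcc_of_le (hp.trans (hpx.trans (hxq.trans hq))).le]
      exact uIcc_subset_Icc (Ioo_subset_Icc_self hu) (Ioo_subset_Icc_self hv)
  have hside : ∀ x₁ ∈ Ioo a b, x₁ ≠ x₀ →
      |x₁ - x₀| * (h x₀ * c) ≤ |x₁ - x₀| * ∫ t in (0 : ℝ)..1, h (t * x₁ + (1 - t) * x₀) := by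
    intro x₁ hx₁ hne
    have hdist : |x₁ - x₀| < b - a := abs_sub_lt_iff.2 ⟨by linarith [hx₁.2, hx₀.1],
      by linarith [hx₁.1, hx₀.2]⟩
    have hnear : ¬(0 < K ∧ π * √((N - 1) / K) ≤ |x₁ - x₀|) :=
      fun ⟨hK, hle⟩ => ((hDK hK).trans hle).not_gt hdist
    gcongr
    exact (mul_le_mul_of_nonneg_left (hc _ ⟨abs_pos.2 (sub_ne_zero.2 hne), hdist⟩)
      (hMCP.2.1 x₀ hx₀)).trans (mul_sKRatioIntegral_le_integral_comp_segment hN.le hMCP hx₀ hx₁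
        hne.symm hnear (hint' hx₀ hx₁))
  have hleft : (x₀ - p) * (h x₀ * c) ≤ ∫ x in p..x₀, h x := by
    have := hside p ⟨hp, hpx.trans (hxq.trans hq)⟩ hpx.ne
    rw [abs_of_neg (sub_neg.2 hpx), neg_sub] at this
    rw [intervalIntegral.integral_symm, ← sub_mul_integral_comp_segment]
    linarith
  have hright : (q - x₀) * (h x₀ * c) ≤ ∫ x in x₀..q, h x := by
    have := hside q ⟨hp.trans (hpx.trans hxq), hq⟩ hxq.ne'
    rwa [abs_of_pos (sub_pos.2 hxq), sub_mul_integral_comp_segment] at this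
  rw [← intervalIntegral.integral_add_adjacent_intervals
    (hint' ⟨hp, hpx.trans (hxq.trans hq)⟩ hx₀) (hint' hx₀ ⟨hp.trans (hpx.trans hxq), hq⟩)]
  linarith

theorem mul_mul_le_integral (hN : 1 < N) (hDK : 0 < K → b - a ≤ π * √((N - 1) / K))
    (hMCP : IsMCPDensity K N (Ioo a b) h) (hint : IntervalIntegrable h volume a b)
    (hc : ∀ d ∈ Ioo 0 (b - a), c ≤ sKRatioIntegral (K / (N - 1)) (N - 1) d)
    {x₀ : ℝ} (hx₀ : x₀ ∈ Ioo a b) :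
    h x₀ * c * (b - a) ≤ ∫ x in a..b, h x := by
  have hnonneg : 0 ≤ᵐ[volume.restrict (Ioc a b)] h :=
    (ae_restrict_congr_set Ioo_ae_eq_Ioc).1
      (ae_restrict_of_forall_mem measurableSet_Ioo hMCP.2.1)
  have hlim : Tendsto (fun ε => h x₀ * c * ((b - ε) - (a + ε))) (𝓝[>] 0)
      (𝓝 (h x₀ * c * (b - a))) := by
    have hcont : Continuous fun ε => h x₀ * c * ((b - ε) - (a + ε)) := by fun_prop
    simpa using (hcont.tendsto 0).mono_left nhdsWithin_le_nhds
  refine le_of_tendsto hlim ?_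
  filter_upwards [Ioo_mem_nhdsGT (lt_min (sub_pos.2 hx₀.1) (sub_pos.2 hx₀.2))] with ε hε
  obtain ⟨hε₀, hε₁⟩ := hε
  rw [lt_min_iff] at hε₁
  calc h x₀ * c * ((b - ε) - (a + ε)) ≤ ∫ x in (a + ε)..(b - ε), h x :=
        mul_mul_sub_le_integral hN hDK hMCP hint hc (by linarith) (by linarith) (by linarith)
          (by linarith)
    _ ≤ ∫ x in a..b, h x :=
        intervalIntegral.integral_mono_interval (by linarith) (by linarith) (by linarith)
          hnonneg hint

end IsMCPDensity

/-- Lemma A.8 (apriori sup-bound for an `MCP(K,N)`-density on `(a,b)` integrating to 1). -/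
theorem sup_bound_of_mcp_density (K N a b : ℝ) (hN : 1 < N) (hab : a < b)
    (hDK : 0 < K → b - a ≤ Real.pi * Real.sqrt ((N - 1) / K))
    (h : ℝ → ℝ) (hMCP : IsMCPDensity K N (Set.Ioo a b) h)
    (hint : (∫ x in a..b, h x) = 1) :
    (0 ≤ K → ∀ x ∈ Set.Ioo a b, h x ≤ N / (b - a)) ∧
    (K < 0 → ∀ x ∈ Set.Ioo a b,
      h x ≤ (1 / (b - a)) *
        (∫ t in (0:ℝ)..1,
          (sK (K / (N - 1)) (t * (b - a)) / sK (K / (N - 1)) (b - a)) ^ (N - 1))⁻¹) := by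
  have hN₀ : 0 < N - 1 := sub_pos.2 hN
  have hD : 0 < b - a := sub_pos.2 hab
  have hh : IntervalIntegrable h volume a b := by
    by_contra hne
    rw [intervalIntegral.integral_undef hne] at hint
    exact zero_ne_one hint
  have key : ∀ c, (∀ d ∈ Ioo 0 (b - a), c ≤ sKRatioIntegral (K / (N - 1)) (N - 1) d) →
      ∀ x ∈ Ioo a b, h x * c * (b - a) ≤ 1 :=
    fun c hc x hx => hint ▸ hMCP.mul_mul_le_integral hN hDK hh hc hx
  constructor
  · intro hK x hx
    have hc : ∀ d ∈ Ioo 0 (b - a), N⁻¹ ≤ sKRatioIntegral (K / (N - 1)) (N - 1) d :=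
      fun d hd => by
        simpa using inv_add_one_le_sKRatioIntegral (div_nonneg hK hN₀.le) hN₀.le hd.1
          (sqrt_div_mul_lt_pi hK hN₀ hDK hd.2)
    rw [le_div_iff₀ hD]
    have := key _ hc x hx
    field_simp at this
    linarith
  · intro hK x hx
    have hκ : K / (N - 1) < 0 := div_neg_of_neg_of_pos hK hN₀
    have hJ := sKRatioIntegral_pos (κ := K / (N - 1)) hN₀.le hD
      fun hpos => (lt_asymm hκ hpos).elim
    have := key _ (fun d hd => sKRatioIntegral_le_of_le hκ hN₀.le hd.1 hd.2.le) x hx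
    change h x ≤ 1 / (b - a) * (sKRatioIntegral (K / (N - 1)) (N - 1) (b - a))⁻¹
    rw [one_div, ← mul_inv, ← one_div, le_div_iff₀ (mul_pos hD hJ)]
    linarith

end
end

section
/- Let K ∈ ℝ, N ∈ (1,∞), D > 0 (with D ≤ π√((N−1)/K) if K > 0). Then the function x ↦ s_{K/(N−1)}(D−x) / s_{K/(N−1)}(x) is non-increasing on (0,D); moreover it is strictly decreasing unless K > 0 and D = π√((N−1)/K) (in which case it is constantly equal to 1). Equivalently, for all 0 < x₀ ≤ x₁ < D one has s_{K/(N−1)}(D−x₁) · s_{K/(N−1)}(x₀) ≤ s_{K/(N−1)}(D−x₀) · s_{K/(N−1)}(x₁), with strict inequality when x₀ < x₁ unless K > 0 and D = π√((N−1)/K). -/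
open MeasureTheory Filter

noncomputable section

/-!
The whole statement rests on the addition-formula identity
`s(D - x₀) s(x₁) - s(D - x₁) s(x₀) = s(D) s(x₁ - x₀)`, valid for every curvature `κ`
(for `κ > 0` it is `sin(a - b) sin c - sin(a - c) sin b = sin a sin(c - b)`, similarly for `sinh`).
When `√κ D ≤ π` both factors on the right are nonnegative, and they are positive as soon as
`x₀ < x₁` and `√κ D < π`. In the extremal case `√κ D = π` one has `s(D - x) = s(x)`
because `sin(π - θ) = sin θ`.
-/

open Real Set

theorem sK_sub_mul_sK_sub_sK_sub_mul_sK (κ D x₀ x₁ : ℝ) :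
    sK κ (D - x₀) * sK κ x₁ - sK κ (D - x₁) * sK κ x₀ = sK κ D * sK κ (x₁ - x₀) := by
  unfold sK
  split_ifs <;> simp only [mul_sub, sin_sub, sinh_sub] <;> ring

theorem sK_nonneg {κ x : ℝ} (hx : 0 ≤ x) (hκx : 0 < κ → √κ * x ≤ π) : 0 ≤ sK κ x := by
  unfold sK
  split_ifs with hκ
  · exact div_nonneg (sin_nonneg_of_nonneg_of_le_pi (by positivity) (hκx hκ)) (sqrt_nonneg κ)
  · exact hx
  · exact div_nonneg (sinh_nonneg_iff.2 (by positivity)) (sqrt_nonneg _)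

theorem sK_pos_s7 {κ x : ℝ} (hx : 0 < x) (hκx : 0 < κ → √κ * x < π) : 0 < sK κ x := by
  unfold sK
  split_ifs with hκ hκ'
  · exact div_pos (sin_pos_of_pos_of_lt_pi (by positivity) (hκx hκ)) (sqrt_pos.2 hκ)
  · exact hx
  · have hneg : 0 < √(-κ) := sqrt_pos.2 (neg_pos.2 (lt_of_le_of_ne (not_lt.1 hκ) hκ'))
    exact div_pos (sinh_pos_iff.2 (by positivity)) hneg

theorem sK_pos_of_mem_Ioo {κ D x : ℝ} (hκD : 0 < κ → √κ * D ≤ π) (hx : x ∈ Ioo 0 D) :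
    0 < sK κ x :=
  sK_pos_s7 hx.1 fun hκ => (mul_lt_mul_of_pos_left hx.2 (sqrt_pos.2 hκ)).trans_le (hκD hκ)

theorem sK_sub_eq_of_sqrt_mul_eq_pi {κ D : ℝ} (hκ : 0 < κ) (hκD : √κ * D = π) (x : ℝ) :
    sK κ (D - x) = sK κ x := by
  simp only [sK, if_pos hκ, mul_sub, hκD, sin_pi_sub]

section Cross

variable {κ D x₀ x₁ : ℝ}

theorem sK_sub_mul_sK_le (hx₀ : 0 < x₀) (hle : x₀ ≤ x₁) (hx₁ : x₁ < D)
    (hκD : 0 < κ → √κ * D ≤ π) :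
    sK κ (D - x₁) * sK κ x₀ ≤ sK κ (D - x₀) * sK κ x₁ := by
  have hD : 0 ≤ sK κ D := sK_nonneg (by linarith) hκD
  have hgap : 0 ≤ sK κ (x₁ - x₀) := sK_nonneg (sub_nonneg.2 hle) fun hκ =>
    (mul_le_mul_of_nonneg_left (by linarith) (sqrt_nonneg κ)).trans (hκD hκ)
  rw [← sub_nonneg, sK_sub_mul_sK_sub_sK_sub_mul_sK]
  exact mul_nonneg hD hgap

theorem sK_sub_mul_sK_lt (hx₀ : 0 < x₀) (hlt : x₀ < x₁) (hx₁ : x₁ < D)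
    (hκD : 0 < κ → √κ * D < π) :
    sK κ (D - x₁) * sK κ x₀ < sK κ (D - x₀) * sK κ x₁ := by
  have hD : 0 < sK κ D := sK_pos_s7 (by linarith) hκD
  have hgap : 0 < sK κ (x₁ - x₀) := sK_pos_s7 (sub_pos.2 hlt) fun hκ =>
    (mul_lt_mul_of_pos_left (by linarith) (sqrt_pos.2 hκ)).trans (hκD hκ)
  rw [← sub_pos, sK_sub_mul_sK_sub_sK_sub_mul_sK]
  exact mul_pos hD hgap

theorem antitoneOn_sK_sub_div_sK (hκD : 0 < κ → √κ * D ≤ π) :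
    AntitoneOn (fun x => sK κ (D - x) / sK κ x) (Ioo 0 D) := by
  intro x₀ hx₀ x₁ hx₁ hle
  rw [div_le_div_iff₀ (sK_pos_of_mem_Ioo hκD hx₁) (sK_pos_of_mem_Ioo hκD hx₀)]
  exact sK_sub_mul_sK_le hx₀.1 hle hx₁.2 hκD

theorem strictAntiOn_sK_sub_div_sK (hκD : 0 < κ → √κ * D < π) :
    StrictAntiOn (fun x => sK κ (D - x) / sK κ x) (Ioo 0 D) := by
  have hκD' : 0 < κ → √κ * D ≤ π := fun hκ => (hκD hκ).le
  intro x₀ hx₀ x₁ hx₁ hlt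
  rw [div_lt_div_iff₀ (sK_pos_of_mem_Ioo hκD' hx₁) (sK_pos_of_mem_Ioo hκD' hx₀)]
  exact sK_sub_mul_sK_lt hx₀.1 hlt hx₁.2 hκD

end Cross

theorem pi_mul_sqrt_div_eq {K M : ℝ} : π * √(M / K) = π / √(K / M) := by
  rw [div_eq_mul_inv π, ← sqrt_inv, inv_div]

theorem le_pi_mul_sqrt_div_iff {K M D : ℝ} (hKM : 0 < K / M) :
    D ≤ π * √(M / K) ↔ √(K / M) * D ≤ π := by
  rw [pi_mul_sqrt_div_eq, le_div_iff₀ (sqrt_pos.2 hKM), mul_comm]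

theorem eq_pi_mul_sqrt_div_iff {K M D : ℝ} (hKM : 0 < K / M) :
    D = π * √(M / K) ↔ √(K / M) * D = π := by
  rw [pi_mul_sqrt_div_eq, eq_div_iff (sqrt_pos.2 hKM).ne', mul_comm]

theorem sK_ratio_antitone_general (K N D : ℝ) (hN : 1 < N)
    (hDK : 0 < K → D ≤ Real.pi * Real.sqrt ((N - 1) / K)) :
    AntitoneOn (fun x => sK (K / (N - 1)) (D - x) / sK (K / (N - 1)) x) (Set.Ioo 0 D) ∧
    (¬(0 < K ∧ D = Real.pi * Real.sqrt ((N - 1) / K)) →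
      StrictAntiOn (fun x => sK (K / (N - 1)) (D - x) / sK (K / (N - 1)) x) (Set.Ioo 0 D)) ∧
    ((0 < K ∧ D = Real.pi * Real.sqrt ((N - 1) / K)) →
      ∀ x ∈ Set.Ioo (0:ℝ) D, sK (K / (N - 1)) (D - x) / sK (K / (N - 1)) x = 1) ∧
    (∀ x₀ x₁ : ℝ, 0 < x₀ → x₀ ≤ x₁ → x₁ < D →
      sK (K / (N - 1)) (D - x₁) * sK (K / (N - 1)) x₀ ≤
        sK (K / (N - 1)) (D - x₀) * sK (K / (N - 1)) x₁) ∧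
    (¬(0 < K ∧ D = Real.pi * Real.sqrt ((N - 1) / K)) →
      ∀ x₀ x₁ : ℝ, 0 < x₀ → x₀ < x₁ → x₁ < D →
        sK (K / (N - 1)) (D - x₁) * sK (K / (N - 1)) x₀ <
          sK (K / (N - 1)) (D - x₀) * sK (K / (N - 1)) x₁) := by
  have hK : 0 < K ↔ 0 < K / (N - 1) := (div_pos_iff_of_pos_right (sub_pos.2 hN)).symm
  have hκD : 0 < K / (N - 1) → √(K / (N - 1)) * D ≤ π := fun hκ =>
    (le_pi_mul_sqrt_div_iff hκ).1 (hDK (hK.2 hκ))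
  have hκD_lt : ¬(0 < K ∧ D = π * √((N - 1) / K)) → 0 < K / (N - 1) →
      √(K / (N - 1)) * D < π := fun hne hκ =>
    (hκD hκ).lt_of_ne fun h => hne ⟨hK.2 hκ, (eq_pi_mul_sqrt_div_iff hκ).2 h⟩
  refine ⟨antitoneOn_sK_sub_div_sK hκD, fun hne => strictAntiOn_sK_sub_div_sK (hκD_lt hne),
    ?_, fun _ _ h₀ hle h₁ => sK_sub_mul_sK_le h₀ hle h₁ hκD,
    fun hne _ _ h₀ hlt h₁ => sK_sub_mul_sK_lt h₀ hlt h₁ (hκD_lt hne)⟩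
  rintro ⟨hKpos, hDeq⟩ x hx
  have hκ := hK.1 hKpos
  rw [sK_sub_eq_of_sqrt_mul_eq_pi hκ ((eq_pi_mul_sqrt_div_iff hκ).1 hDeq)]
  exact div_self (sK_pos_of_mem_Ioo hκD hx).ne'

/-- The function `x ↦ s_{K/(N−1)}(D−x)/s_{K/(N−1)}(x)` is non-increasing on `(0,D)`,
strictly decreasing unless `K > 0` and `D = π√((N−1)/K)` (in which case it is
constantly `1`); equivalently, the corresponding cross-product inequalities hold. -/
theorem sK_ratio_antitone (K N D : ℝ) (hN : 1 < N) (hD : 0 < D)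
    (hDK : 0 < K → D ≤ Real.pi * Real.sqrt ((N - 1) / K)) :
    AntitoneOn (fun x => sK (K / (N - 1)) (D - x) / sK (K / (N - 1)) x) (Set.Ioo 0 D) ∧
    (¬(0 < K ∧ D = Real.pi * Real.sqrt ((N - 1) / K)) →
      StrictAntiOn (fun x => sK (K / (N - 1)) (D - x) / sK (K / (N - 1)) x) (Set.Ioo 0 D)) ∧
    ((0 < K ∧ D = Real.pi * Real.sqrt ((N - 1) / K)) →
      ∀ x ∈ Set.Ioo (0:ℝ) D, sK (K / (N - 1)) (D - x) / sK (K / (N - 1)) x = 1) ∧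
    (∀ x₀ x₁ : ℝ, 0 < x₀ → x₀ ≤ x₁ → x₁ < D →
      sK (K / (N - 1)) (D - x₁) * sK (K / (N - 1)) x₀ ≤
        sK (K / (N - 1)) (D - x₀) * sK (K / (N - 1)) x₁) ∧
    (¬(0 < K ∧ D = Real.pi * Real.sqrt ((N - 1) / K)) →
      ∀ x₀ x₁ : ℝ, 0 < x₀ → x₀ < x₁ → x₁ < D →
        sK (K / (N - 1)) (D - x₁) * sK (K / (N - 1)) x₀ <
          sK (K / (N - 1)) (D - x₀) * sK (K / (N - 1)) x₁) :=
  sK_ratio_antitone_general K N D hN hDK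

end
end
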